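/- Let θ₀ = 1 and suppose the positive sequence {θ_k} satisfies θ_{k+1} − θ_k ≤ −θ_k^ν θ_{k+1}/√(Q θ_k + R²) with Q > 0, R ≥ 0, ν > 1/2, and θ_{k+1}/θ_k ≥ δ > 0 for all k. Then θ_k ≤ (4√Q/(4√Q + δ(2ν−1)k))^{2/(2ν−1)} + (2R/(2R + δν k))^{1/ν} for all k ≥ 0. -/

import Mathlib

/-!
Along the sequence the potential
`Φ(x) = √Q (x^{-(ν-1/2)} - 1)/(ν - 1/2) + R (x^{-ν} - 1)/ν` grows by at least `δ` per step:
by convexity of `x ↦ x^{-r}` the increment `Φ(θ_{k+1}) - Φ(θ_k)` is at least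
`(√Q √θ_k + R) θ_k^{-ν-1} (θ_k - θ_{k+1})`, the recursion together with `θ_{k+1} ≥ δ θ_k` gives
`θ_k - θ_{k+1} ≥ δ θ_k^{ν+1} / √(Q θ_k + R²)`, and `√(Q θ_k + R²) ≤ √Q √θ_k + R`.
Hence `Φ(θ_k) ≥ δ k`, so one of the two summands of `Φ(θ_k)` is at least `δ k / 2`; inverting that
summand bounds `θ_k` by the corresponding term of the claimed estimate.
-/

open Real

lemma one_add_mul_one_sub_le_rpow_neg {u r : ℝ} (hu : 0 < u) (hr : 0 ≤ r) :
    1 + r * (1 - u) ≤ u ^ (-r) := by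
  rw [rpow_def_of_pos hu]
  nlinarith [log_le_sub_one_of_pos hu, add_one_le_exp (log u * -r)]

/-- The tangent-line inequality for the convex function `x ↦ x ^ (-r)`. -/
lemma rpow_neg_sub_one_mul_sub_le {x y r : ℝ} (hx : 0 < x) (hy : 0 < y) (hr : 0 < r) :
    x ^ (-r - 1) * (x - y) ≤ (y ^ (-r) - x ^ (-r)) / r := by
  have hxr : 0 < x ^ (-r) := rpow_pos_of_pos hx _
  have key := mul_le_mul_of_nonneg_left
    (one_add_mul_one_sub_le_rpow_neg (div_pos hy hx) hr.le) hxr.le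
  rw [div_rpow hy.le hx.le, mul_div_cancel₀ _ hxr.ne'] at key
  rw [le_div_iff₀ hr, rpow_sub_one hx.ne']
  field_simp at key ⊢
  linarith

lemma sqrt_mul_add_sq_le {Q R x : ℝ} (hQ : 0 ≤ Q) (hR : 0 ≤ R) (hx : 0 ≤ x) :
    √(Q * x + R ^ 2) ≤ √Q * √x + R := by
  rw [sqrt_le_left (by positivity)]
  nlinarith [sq_sqrt hQ, sq_sqrt hx, mul_nonneg (mul_nonneg (sqrt_nonneg Q) (sqrt_nonneg x)) hR]

noncomputable def lyapunovPotential (Q R ν x : ℝ) : ℝ :=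
  √Q * ((x ^ (-(ν - 1 / 2)) - 1) / (ν - 1 / 2)) + R * ((x ^ (-ν) - 1) / ν)

@[simp]
lemma lyapunovPotential_one (Q R ν : ℝ) : lyapunovPotential Q R ν 1 = 0 := by
  simp [lyapunovPotential]

lemma mul_rpow_neg_sub_one_mul_sub_le_lyapunovPotential_sub {Q R ν x y : ℝ} (hR : 0 ≤ R)
    (hν : 1 / 2 < ν) (hx : 0 < x) (hy : 0 < y) :
    (√Q * √x + R) * x ^ (-ν - 1) * (x - y) ≤
      lyapunovPotential Q R ν y - lyapunovPotential Q R ν x := by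
  have hsplit : x ^ (-(ν - 1 / 2) - 1) = √x * x ^ (-ν - 1) := by
    rw [sqrt_eq_rpow, ← rpow_add hx]; ring_nf
  have h₁ := rpow_neg_sub_one_mul_sub_le hx hy (sub_pos.mpr hν)
  have h₂ := rpow_neg_sub_one_mul_sub_le hx hy (by linarith : 0 < ν)
  rw [hsplit] at h₁
  calc (√Q * √x + R) * x ^ (-ν - 1) * (x - y)
      = √Q * (√x * x ^ (-ν - 1) * (x - y)) + R * (x ^ (-ν - 1) * (x - y)) := by ring
    _ ≤ √Q * ((y ^ (-(ν - 1 / 2)) - x ^ (-(ν - 1 / 2))) / (ν - 1 / 2)) +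
        R * ((y ^ (-ν) - x ^ (-ν)) / ν) := by gcongr
    _ = lyapunovPotential Q R ν y - lyapunovPotential Q R ν x := by
      simp only [lyapunovPotential]; ring

lemma lyapunovPotential_add_le {Q R ν δ x y : ℝ} (hQ : 0 < Q) (hR : 0 ≤ R) (hν : 1 / 2 < ν)
    (hx : 0 < x) (hy : 0 < y) (hδ : δ * x ≤ y)
    (hrec : y - x ≤ -(x ^ ν * y) / √(Q * x + R ^ 2)) :
    lyapunovPotential Q R ν x + δ ≤ lyapunovPotential Q R ν y := by
  set S := √(Q * x + R ^ 2)
  have hS : 0 < S := sqrt_pos.mpr (by positivity)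
  have hdecr : x ^ ν * y ≤ S * (x - y) := by
    rw [neg_div, le_neg, neg_sub, div_le_iff₀ hS] at hrec; linarith
  have hxy : 0 ≤ x - y := by
    nlinarith [mul_pos (rpow_pos_of_pos hx ν) hy]
  have hcancel : x ^ (-ν - 1) * x ^ (ν + 1) = 1 := by
    rw [← rpow_add hx]; ring_nf; exact rpow_zero x
  rw [← le_sub_iff_add_le']
  calc δ = x ^ (-ν - 1) * x ^ (ν + 1) * δ := by rw [hcancel, one_mul]
    _ = x ^ (-ν - 1) * (x ^ ν * (δ * x)) := by rw [rpow_add_one hx.ne']; ring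
    _ ≤ x ^ (-ν - 1) * (S * (x - y)) := by
        gcongr x ^ (-ν - 1) * ?_
        exact (mul_le_mul_of_nonneg_left hδ (rpow_nonneg hx.le ν)).trans hdecr
    _ ≤ x ^ (-ν - 1) * ((√Q * √x + R) * (x - y)) := by
        gcongr; exact sqrt_mul_add_sq_le hQ.le hR hx.le
    _ ≤ lyapunovPotential Q R ν y - lyapunovPotential Q R ν x := by
        have := mul_rpow_neg_sub_one_mul_sub_le_lyapunovPotential_sub (Q := Q) hR hν hx hy
        linarith

lemma le_lyapunovPotential_of_recurrence {θ : ℕ → ℝ} {Q R ν δ : ℝ} (hQ : 0 < Q) (hR : 0 ≤ R)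
    (hν : 1 / 2 < ν) (hpos : ∀ k, 0 < θ k) (hθ0 : θ 0 = 1) (hδ : ∀ k, δ * θ k ≤ θ (k + 1))
    (hrec : ∀ k, θ (k + 1) - θ k ≤ -(θ k ^ ν * θ (k + 1)) / √(Q * θ k + R ^ 2)) (k : ℕ) :
    δ * k ≤ lyapunovPotential Q R ν (θ k) := by
  induction k with
  | zero => simp [hθ0]
  | succ k ih =>
    have := lyapunovPotential_add_le hQ hR hν (hpos k) (hpos (k + 1)) (hδ k) (hrec k)
    push_cast
    linarith

lemma mul_rpow_neg_sub_one_lt {c s r x : ℝ} (hc : 0 < c) (hs : 0 ≤ s) (hr : 0 < r)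
    (hx : (c / (c + s)) ^ (1 / r) < x) : c * (x ^ (-r) - 1) < s := by
  have hcs : 0 < c / (c + s) := by positivity
  have hpow : ((c / (c + s)) ^ (1 / r)) ^ (-r) = (c + s) / c := by
    rw [← rpow_mul hcs.le, one_div_mul_eq_div, neg_div, div_self hr.ne', rpow_neg_one, inv_div]
  have hlt := rpow_lt_rpow_of_neg (rpow_pos_of_pos hcs _) hx (neg_neg_of_pos hr)
  rw [hpow, lt_div_iff₀ hc] at hlt
  linarith

theorem theta_estimate_nu_gt_half (θ : ℕ → ℝ) (Q R ν δ : ℝ)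
    (hQ : 0 < Q) (hR : 0 ≤ R) (hν : 1/2 < ν) (hδ : 0 < δ)
    (hpos : ∀ k, 0 < θ k) (hθ0 : θ 0 = 1)
    (hratio : ∀ k, θ (k+1) / θ k ≥ δ)
    (hrec : ∀ k, θ (k+1) - θ k ≤
      -((θ k ^ ν) * θ (k+1)) / Real.sqrt (Q * θ k + R^2)) :
    ∀ k : ℕ, θ k ≤
      (4 * Real.sqrt Q / (4 * Real.sqrt Q + δ * (2*ν - 1) * k)) ^ (2 / (2*ν - 1))
      + (2 * R / (2 * R + δ * ν * k)) ^ (1 / ν) := by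
  intro k
  have hp : 0 < ν - 1 / 2 := sub_pos.mpr hν
  have hν0 : 0 < ν := by linarith
  have h2ν : 0 < 2 * ν - 1 := by linarith
  have hΦ := le_lyapunovPotential_of_recurrence hQ hR hν hpos hθ0
    (fun k ↦ (le_div_iff₀ (hpos k)).mp (hratio k)) hrec k
  by_contra! hlt
  have hsqrt : √Q * ((θ k ^ (-(ν - 1 / 2)) - 1) / (ν - 1 / 2)) < δ * k / 2 := by
    have := mul_rpow_neg_sub_one_lt (x := θ k) (by positivity : 0 < 4 * √Q)
      (by positivity : 0 ≤ δ * (2 * ν - 1) * k) hp (by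
        rw [show 1 / (ν - 1 / 2) = 2 / (2 * ν - 1) by field_simp]
        linarith [rpow_nonneg (by positivity : 0 ≤ 2 * R / (2 * R + δ * ν * k)) (1 / ν)])
    rw [mul_div_assoc', div_lt_iff₀ hp]
    linarith
  have hlin : R * ((θ k ^ (-ν) - 1) / ν) ≤ δ * k / 2 := by
    rcases hR.eq_or_lt with rfl | hR
    · simp only [zero_mul]; positivity
    have := mul_rpow_neg_sub_one_lt (x := θ k) (by positivity : 0 < 2 * R)
      (by positivity : 0 ≤ δ * ν * k) hν0 (by
        linarith [rpow_nonneg (by positivity :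
          0 ≤ 4 * √Q / (4 * √Q + δ * (2 * ν - 1) * k)) (2 / (2 * ν - 1))])
    rw [mul_div_assoc', div_le_iff₀ hν0]
    linarith
  rw [lyapunovPotential] at hΦ
  linarith
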